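/- Let A be a complex unital Banach algebra whose group of invertible elements is dense in the norm topology. Fix c, d ∈ A and let φ: A → A be a bijective continuous linear map such that φ(a)φ(b) = d whenever ab = c. Then c is invertible if and only if d is invertible. -/

import Mathlib

/-!
If `a * b = c` and `u = 1 + t • x`, then `(a * u) * (u⁻¹ * b) = c`, so
`t ↦ φ (a * u) * φ (u⁻¹ * b)` is constant near `t = 0`; its derivative there gives
`φ (a * x) * φ b = φ a * φ (x * b)`. When `a` and `φ a` are invertible, this identity
conjugates right multiplication by `φ b` to right multiplication by `b` through bijections,
so `b` is invertible iff `φ b` is.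

If `c` is invertible, density of the units and continuity and surjectivity of `φ` give an
invertible `a` with `φ a` invertible (the units of `A` are open); take `b = a⁻¹ * c`, so that
`d = φ a * φ b`. If `d` is invertible, `d = φ 1 * φ c = φ c * φ 1` makes `φ 1` and `φ c`
invertible; take `a = 1`, `b = c`.
-/

open Topology Function

def PreservesProductsAt {A B : Type*} [Mul A] [Mul B] (φ : A → B) (c : A) (d : B) : Prop :=
  ∀ a b : A, a * b = c → φ a * φ b = d

section Derivatives

variable {𝕜 A : Type*} [NontriviallyNormedField 𝕜] [NormedRing A] [NormedAlgebra 𝕜 A]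

theorem hasDerivAt_one_add_smul (x : A) : HasDerivAt (fun t : 𝕜 => 1 + t • x) x 0 :=
  (((hasDerivAt_id (0 : 𝕜)).smul_const x).const_add 1).congr_deriv (one_smul _ _)

theorem hasDerivAt_ringInverse_one_add_smul [HasSummableGeomSeries A] (x : A) :
    HasDerivAt (fun t : 𝕜 => Ring.inverse (1 + t • x)) (-x) 0 :=
  ((hasFDerivAt_ringInverse (1 : Aˣ)).comp_hasDerivAt_of_eq 0 (hasDerivAt_one_add_smul x)
    (by simp)).congr_deriv (by simp)

end Derivatives

namespace PreservesProductsAt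

variable {𝕜 A B : Type*} [NontriviallyNormedField 𝕜]
  [NormedRing A] [NormedAlgebra 𝕜 A] [HasSummableGeomSeries A] [NormedRing B] [NormedAlgebra 𝕜 B]
  {φ : A →L[𝕜] B} {c : A} {d : B}

theorem map_mul_mul_map_eq (hφ : PreservesProductsAt φ c d) {a b : A} (hab : a * b = c) (x : A) :
    φ (a * x) * φ b = φ a * φ (x * b) := by
  have hderiv : HasDerivAt (fun t : 𝕜 => φ (a * (1 + t • x)) * φ (Ring.inverse (1 + t • x) * b))
      (φ (a * x) * φ b - φ a * φ (x * b)) 0 := by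
    have h₁ := φ.hasFDerivAt.comp_hasDerivAt (0 : 𝕜) ((hasDerivAt_one_add_smul x).const_mul a)
    have h₂ := φ.hasFDerivAt.comp_hasDerivAt (0 : 𝕜)
      ((hasDerivAt_ringInverse_one_add_smul x).mul_const b)
    exact (h₁.fun_mul h₂).congr_deriv (by simp [sub_eq_add_neg])
  have hconst : (fun t : 𝕜 => φ (a * (1 + t • x)) * φ (Ring.inverse (1 + t • x) * b))
      =ᶠ[𝓝 0] fun _ => d := by
    have hunit : ∀ᶠ t in 𝓝 (0 : 𝕜), IsUnit (1 + t • x) :=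
      (Units.isOpen.preimage (by fun_prop)).mem_nhds (by simp)
    filter_upwards [hunit] with t ⟨u, hu⟩
    rw [← hu, Ring.inverse_unit]
    exact hφ _ _ (by rw [mul_assoc, Units.mul_inv_cancel_left, hab])
  exact sub_eq_zero.mp (hderiv.unique ((hasDerivAt_const _ d).congr_of_eventuallyEq hconst))

theorem isUnit_map_iff (hφ : PreservesProductsAt φ c d) (hbij : Bijective φ) {a b : A}
    (hab : a * b = c) (ha : IsUnit a) (hφa : IsUnit (φ a)) : IsUnit (φ b) ↔ IsUnit b := by
  have hcomp : (· * φ b) ∘ (φ ∘ (a * ·)) = ((φ a * ·) ∘ φ) ∘ (· * b) :=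
    funext (hφ.map_mul_mul_map_eq hab)
  rw [IsUnit.isUnit_iff_mulRight_bijective, IsUnit.isUnit_iff_mulRight_bijective,
    ← Bijective.of_comp_iff _ (hbij.comp (IsUnit.isUnit_iff_mulLeft_bijective.mp ha)), hcomp,
    Bijective.of_comp_iff' ((IsUnit.isUnit_iff_mulLeft_bijective.mp hφa).comp hbij)]

end PreservesProductsAt

/-- Theorem 3.3(2). Let `A` be a complex unital Banach algebra with dense
invertible group and `φ : A → A` a bijective continuous linear map preserving products at
`(c, d)`. Then `c` is invertible if and only if `d` is invertible. -/
theorem stmt9 {A : Type*} [NormedRing A] [NormedAlgebra ℂ A] [CompleteSpace A]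
    (hdense : Dense {a : A | IsUnit a})
    (c d : A) (φ : A →L[ℂ] A) (hbij : Function.Bijective φ)
    (h : ∀ a b : A, a * b = c → φ a * φ b = d) :
    IsUnit c ↔ IsUnit d := by
  have hφ : PreservesProductsAt φ c d := h
  constructor
  · intro hc
    obtain ⟨_, ⟨_, ⟨w, rfl⟩, rfl⟩, hφw⟩ :=
      (hbij.2.denseRange.dense_image φ.continuous hdense).exists_mem_open Units.isOpen
        ⟨1, isUnit_one⟩
    have hab : w * (↑w⁻¹ * c) = c := w.mul_inv_cancel_left c
    rw [← hφ _ _ hab]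
    exact hφw.mul ((hφ.isUnit_map_iff hbij hab w.isUnit hφw).mpr (w⁻¹.isUnit.mul hc))
  · intro hd
    have h1c : φ 1 * φ c = d := h 1 c (one_mul c)
    have hcomm : Commute (φ 1) (φ c) := h1c.trans (h c 1 (mul_one c)).symm
    obtain ⟨hφ1, hφc⟩ := hcomm.isUnit_mul_iff.mp (h1c ▸ hd)
    exact (hφ.isUnit_map_iff hbij (one_mul c) isUnit_one hφ1).mp hφc
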